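/- For every M ∈ (0, 1/27), the level set C_M = {(x,y,z) ∈ Δ² : x y z = M} is nonempty, compact and connected, and P(p) ≠ (0,0,0) for every p ∈ C_M (i.e. C_M contains no stationary point of P). -/

import Mathlib

open Filter Set Topology

noncomputable section

/-- The rock–paper–scissors vector field `P` on `ℝ³`, with components
`P₁(x,y,z) = x(z-y)/2`, `P₂(x,y,z) = y(x-z)/2`, `P₃(x,y,z) = z(y-x)/2`. -/
def Pfield : ℝ × ℝ × ℝ → ℝ × ℝ × ℝ :=
  fun p => (p.1 * (p.2.2 - p.2.1) / 2, p.2.1 * (p.1 - p.2.2) / 2, p.2.2 * (p.2.1 - p.1) / 2)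

/-- The simplex `Δ² = {(x,y,z) : x,y,z ≥ 0, x+y+z = 1}`. -/
def simplex2 : Set (ℝ × ℝ × ℝ) :=
  {p | 0 ≤ p.1 ∧ 0 ≤ p.2.1 ∧ 0 ≤ p.2.2 ∧ p.1 + p.2.1 + p.2.2 = 1}

/-!
On `C_M` we have `y + z = 1 - x` and `yz = M / x`, so `|y - z| = √((1 - x)² - 4M/x)`. Hence the
half `y ≥ z` of `C_M` is the graph of a continuous function of `x` over
`I = {x ∈ [0,1] | M ≤ x(1-x)²/4}`, and the other half is its mirror image under `y ↔ z`.
Since `x(1-x)²` increases on `[0,1/3]` and decreases on `[1/3,1]`, `I` is an interval, and by the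
intermediate value theorem it contains a point where `|y - z| = 0`, i.e. where the two halves meet.
A stationary point of `P` with `xyz ≠ 0` is the barycentre, which lies on `C_{1/27}`.
-/

namespace RPS

theorem isClosed_simplex2 : IsClosed simplex2 := by
  simp only [simplex2, ofPred_and]
  refine .inter ?_ (.inter ?_ (.inter ?_ ?_))
  all_goals first
    | exact isClosed_le continuous_const (by fun_prop)
    | exact isClosed_eq (by fun_prop) continuous_const

theorem simplex2_subset_Icc : simplex2 ⊆ Icc 0 1 := by
  rintro ⟨x, y, z⟩ ⟨hx, hy, hz, hsum⟩
  refine ⟨⟨hx, hy, hz⟩, ?_, ?_, ?_⟩ <;> simp only [Prod.fst_one, Prod.snd_one] at * <;>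
    linarith

theorem isCompact_simplex2 : IsCompact simplex2 :=
  isCompact_Icc.of_isClosed_subset isClosed_simplex2 simplex2_subset_Icc

theorem eq_barycenter_of_Pfield_eq_zero {p : ℝ × ℝ × ℝ} (hp : p ∈ simplex2) (hx : p.1 ≠ 0)
    (hy : p.2.1 ≠ 0) (h : Pfield p = (0, 0, 0)) : p = (1/3, 1/3, 1/3) := by
  obtain ⟨x, y, z⟩ := p
  obtain ⟨-, -, -, hsum⟩ := hp
  simp only [Pfield, Prod.mk.injEq] at h
  obtain ⟨h₁, h₂, -⟩ := h
  have hzy : z = y := by simpa [hx, sub_eq_zero] using h₁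
  have hxz : x = z := by simpa [hy, sub_eq_zero] using h₂
  simp only [Prod.mk.injEq]
  refine ⟨?_, ?_, ?_⟩ <;> linarith

def levelSet (M : ℝ) : Set (ℝ × ℝ × ℝ) := {p ∈ simplex2 | p.1 * p.2.1 * p.2.2 = M}

theorem isCompact_levelSet (M : ℝ) : IsCompact (levelSet M) :=
  isCompact_simplex2.inter_right (isClosed_eq (by fun_prop) continuous_const)

/-- The maximum of `x * y * z` over the points of `Δ²` with first coordinate `x`, taken at
`y = z = (1 - x) / 2`. -/
def sliceMax (x : ℝ) : ℝ := x * (1 - x) ^ 2 / 4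

theorem monotoneOn_sliceMax : MonotoneOn sliceMax (Icc 0 (1/3)) := by
  rintro a ⟨ha₀, ha₁⟩ b ⟨hb₀, hb₁⟩ hab
  have key : 0 ≤ (1 - (a + b)) ^ 2 - a * b := by nlinarith
  unfold sliceMax
  nlinarith [mul_nonneg (sub_nonneg.2 hab) key]

theorem antitoneOn_sliceMax : AntitoneOn sliceMax (Icc (1/3) 1) := by
  rintro a ⟨ha₀, ha₁⟩ b ⟨hb₀, hb₁⟩ hab
  have key : (1 - (a + b)) ^ 2 - a * b ≤ 0 := by nlinarith
  unfold sliceMax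
  nlinarith [mul_nonneg (sub_nonneg.2 hab) (neg_nonneg.2 key)]

theorem exists_sliceMax_eq {M : ℝ} (hM₀ : 0 < M) (hM : M < 1/27) :
    ∃ a ∈ Icc 0 (1/3), sliceMax a = M := by
  have hcont : ContinuousOn sliceMax (Icc 0 (1/3)) := by unfold sliceMax; fun_prop
  exact intermediate_value_Icc (by norm_num) hcont
    ⟨by norm_num [sliceMax]; linarith, by norm_num [sliceMax]; linarith⟩

def levelDomain (M : ℝ) : Set ℝ := {x ∈ Icc 0 1 | M ≤ sliceMax x}

theorem ordConnected_levelDomain (M : ℝ) : OrdConnected (levelDomain M) := by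
  refine ⟨fun a ⟨⟨ha₀, _⟩, ha⟩ b ⟨⟨_, hb₁⟩, hb⟩ x ⟨hax, hxb⟩ =>
    ⟨⟨ha₀.trans hax, hxb.trans hb₁⟩, ?_⟩⟩
  rcases le_total x (1/3) with hx | hx
  · exact ha.trans (monotoneOn_sliceMax ⟨ha₀, hax.trans hx⟩ ⟨ha₀.trans hax, hx⟩ hax)
  · exact hb.trans (antitoneOn_sliceMax ⟨hx, hxb.trans hb₁⟩ ⟨hx.trans hxb, hb₁⟩ hxb)

theorem pos_of_mem_levelDomain {M x : ℝ} (hM : 0 < M) (hx : x ∈ levelDomain M) : 0 < x := by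
  refine hx.1.1.lt_of_ne ?_
  rintro rfl
  have := hx.2
  simp only [sliceMax] at this
  linarith

/-- On `levelSet M` this is `|y - z|`, since `(y - z)² = (y + z)² - 4yz = (1 - x)² - 4M/x`. -/
def gap (M x : ℝ) : ℝ := √((1 - x) ^ 2 - 4 * M / x)

theorem gap_sq {M x : ℝ} (hM : 0 < M) (hx : x ∈ levelDomain M) :
    gap M x ^ 2 = (1 - x) ^ 2 - 4 * M / x := by
  have hx₀ := pos_of_mem_levelDomain hM hx
  refine Real.sq_sqrt (sub_nonneg.2 ((div_le_iff₀ hx₀).2 ?_))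
  have := hx.2
  unfold sliceMax at this
  linarith

theorem gap_le {M x : ℝ} (hM : 0 < M) (hx : x ∈ levelDomain M) : gap M x ≤ 1 - x := by
  have hx₀ := pos_of_mem_levelDomain hM hx
  refine Real.sqrt_le_iff.2 ⟨by linarith [hx.1.2], ?_⟩
  have : 0 < 4 * M / x := by positivity
  linarith

theorem continuousOn_gap {M : ℝ} (hM : 0 < M) : ContinuousOn (gap M) (levelDomain M) :=
  ((continuousOn_const.sub continuousOn_id).pow 2 |>.sub
    (continuousOn_const.div continuousOn_id fun _ hx => (pos_of_mem_levelDomain hM hx).ne')).sqrt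

theorem gap_eq_abs {M x y z : ℝ} (hp : (x, y, z) ∈ levelSet M) (hx : x ≠ 0) :
    gap M x = |y - z| := by
  obtain ⟨⟨-, -, -, hsum⟩, hprod⟩ := hp
  dsimp only at hsum hprod
  have hyz : 4 * M / x = 4 * (y * z) := by rw [← hprod]; field_simp
  rw [gap, ← Real.sqrt_sq_eq_abs, hyz, show 1 - x = y + z by linarith]
  ring_nf

def branch (M x : ℝ) : ℝ × ℝ × ℝ := (x, (1 - x + gap M x) / 2, (1 - x - gap M x) / 2)

theorem continuousOn_branch {M : ℝ} (hM : 0 < M) : ContinuousOn (branch M) (levelDomain M) := by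
  have := continuousOn_gap hM
  unfold branch
  fun_prop

theorem branch_mem_levelSet {M x : ℝ} (hM : 0 < M) (hx : x ∈ levelDomain M) :
    branch M x ∈ levelSet M := by
  have hx₀ := pos_of_mem_levelDomain hM hx
  have hsq := gap_sq hM hx
  have hle := gap_le hM hx
  have hgap : 0 ≤ gap M x := Real.sqrt_nonneg _
  refine ⟨⟨hx₀.le, ?_, ?_, ?_⟩, ?_⟩ <;> dsimp only [branch]
  · linarith
  · linarith
  · ring
  · field_simp at hsq
    linear_combination (-1 / 4) * hsq

theorem mem_levelDomain_and_branch_eq {M x y z : ℝ} (hM : 0 < M) (hp : (x, y, z) ∈ levelSet M)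
    (hzy : z ≤ y) :
    x ∈ levelDomain M ∧ branch M x = (x, y, z) := by
  have hgap := gap_eq_abs hp
  obtain ⟨⟨hx, hy, hz, hsum⟩, hprod⟩ := hp
  dsimp only at hx hy hz hsum hprod
  have hx₀ : x ≠ 0 := by
    rintro rfl
    linarith [zero_mul y ▸ zero_mul z ▸ hprod]
  refine ⟨⟨⟨hx, by linarith⟩, ?_⟩, ?_⟩
  · have hslice : sliceMax x - M = x * (y - z) ^ 2 / 4 := by
      rw [sliceMax, ← hprod, show 1 - x = y + z by linarith]
      ring
    nlinarith [mul_nonneg hx (sq_nonneg (y - z))]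
  · rw [branch, hgap hx₀, abs_of_nonneg (sub_nonneg.2 hzy)]
    ext <;> dsimp only <;> linarith

def swap23 (p : ℝ × ℝ × ℝ) : ℝ × ℝ × ℝ := (p.1, p.2.2, p.2.1)

theorem swap23_mem_levelSet {M : ℝ} {p : ℝ × ℝ × ℝ} (hp : p ∈ levelSet M) :
    swap23 p ∈ levelSet M := by
  obtain ⟨⟨hx, hy, hz, hsum⟩, hprod⟩ := hp
  exact ⟨⟨hx, hz, hy, by simp only [swap23]; linarith⟩, by simp only [swap23]; linarith⟩

theorem levelSet_eq_union {M : ℝ} (hM : 0 < M) :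
    levelSet M = branch M '' levelDomain M ∪ swap23 '' (branch M '' levelDomain M) := by
  refine Subset.antisymm (fun p hp => ?_) (union_subset ?_ ?_)
  · obtain ⟨x, y, z⟩ := p
    rcases le_total z y with hzy | hyz
    · obtain ⟨hx, hbranch⟩ := mem_levelDomain_and_branch_eq hM hp hzy
      exact Or.inl ⟨x, hx, hbranch⟩
    · obtain ⟨hx, hbranch⟩ := mem_levelDomain_and_branch_eq hM (swap23_mem_levelSet hp) hyz
      exact Or.inr ⟨_, ⟨x, hx, hbranch⟩, rfl⟩
  · exact image_subset_iff.2 fun x hx => branch_mem_levelSet hM hx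
  · rintro _ ⟨_, ⟨x, hx, rfl⟩, rfl⟩
    exact swap23_mem_levelSet (branch_mem_levelSet hM hx)

theorem isConnected_levelSet {M : ℝ} (hM₀ : 0 < M) (hM : M < 1/27) :
    IsConnected (levelSet M) := by
  obtain ⟨a, ⟨ha₀, ha₁⟩, hslice⟩ := exists_sliceMax_eq hM₀ hM
  have ha : a ∈ levelDomain M := ⟨⟨ha₀, by linarith⟩, hslice.ge⟩
  have hgap : gap M a = 0 := by
    have ha_ne := (pos_of_mem_levelDomain hM₀ ha).ne'
    rw [gap, ← hslice, sliceMax, show 4 * (a * (1 - a) ^ 2 / 4) / a = (1 - a) ^ 2 by field_simp,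
      sub_self, Real.sqrt_zero]
  have hfixed : swap23 (branch M a) = branch M a := by simp [swap23, branch, hgap]
  have hdomain : IsConnected (levelDomain M) :=
    ⟨⟨a, ha⟩, (ordConnected_levelDomain M).isPreconnected⟩
  have hhalf := hdomain.image _ (continuousOn_branch hM₀)
  rw [levelSet_eq_union hM₀]
  exact .union ⟨branch M a, ⟨a, ha, rfl⟩, ⟨_, ⟨a, ha, rfl⟩, hfixed⟩⟩ hhalf
    (hhalf.image _ (by unfold swap23; fun_prop))

end RPS

open RPS in
/-- For `M ∈ (0, 1/27)`, the level set `C_M = {(x,y,z) ∈ Δ² : xyz = M}` is nonempty,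
compact and connected, and contains no stationary point of `P`. -/
theorem rps_level_set_properties (M : ℝ) (hM0 : 0 < M) (hM : M < 1/27) :
    ({p ∈ simplex2 | p.1 * p.2.1 * p.2.2 = M}).Nonempty ∧
    IsCompact {p ∈ simplex2 | p.1 * p.2.1 * p.2.2 = M} ∧
    IsConnected {p ∈ simplex2 | p.1 * p.2.1 * p.2.2 = M} ∧
    ∀ p ∈ {p ∈ simplex2 | p.1 * p.2.1 * p.2.2 = M}, Pfield p ≠ (0, 0, 0) := by
  have hconn : IsConnected (levelSet M) := isConnected_levelSet hM0 hM
  refine ⟨hconn.nonempty, isCompact_levelSet M, hconn, ?_⟩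
  rintro p ⟨hp, hprod⟩ hstat
  have hxyz : p.1 * p.2.1 * p.2.2 ≠ 0 := hprod ▸ hM0.ne'
  simp only [mul_ne_zero_iff] at hxyz
  rw [eq_barycenter_of_Pfield_eq_zero hp hxyz.1.1 hxyz.1.2 hstat] at hprod
  norm_num at hprod
  linarith
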